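/- arXiv:1510.00315 — 4 statements merged into one kernel-verified Lean document; each statement's English description precedes it below -/
import Mathlib

section
/- Let p : (0,1) → ℝ be a measurable probability density on (0,1) (p ≥ 0 and ∫₀¹ p(β) dβ = 1). For every t > 0, the scaled tail probabilities of the rescaled waiting times converge: lim_{n→∞} n · ∫₀¹ min(1, n^{-1} t^{-β}) p(β) dβ = ∫₀¹ t^{-β} p(β) dβ, and the limit is finite. -/
/-!
Since `n · min(1, n⁻¹ x) = min(n, x)`, the scaled tail is `∫₀¹ min(n, t^(-β)) p β dβ`. For each
`β` the integrand equals `t^(-β) p β` once `n ≥ t^(-β)`, and `|min(n, x)| ≤ |x|` dominates it by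
`|t^(-β) p β|`. That is integrable because `β ↦ t^(-β)` is bounded on `[0, 1]` and `p` is
integrable (its integral is `1 ≠ 0`), so dominated convergence concludes.
-/

open MeasureTheory Filter Set Topology

section Truncation

variable {α : Type*}

lemma abs_min_le_abs [AddCommGroup α] [LinearOrder α] [IsOrderedAddMonoid α] {a x : α}
    (ha : 0 ≤ a) : |min a x| ≤ |x| :=
  abs_le.mpr ⟨le_min ((neg_nonpos.mpr (abs_nonneg x)).trans ha) (neg_abs_le x),
    (min_le_right a x).trans (le_abs_self x)⟩

lemma mul_min_one_inv_mul [Field α] [LinearOrder α] [IsStrictOrderedRing α] {a x : α}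
    (ha : 0 ≤ a) (hx : 0 ≤ x) : a * min 1 (a⁻¹ * x) = min a x := by
  rcases ha.eq_or_lt with rfl | ha
  · simp [hx]
  · rw [mul_min_of_nonneg _ _ ha.le, mul_one, ← mul_assoc, mul_inv_cancel₀ ha.ne', one_mul]

end Truncation

theorem tendsto_integral_min_natCast_mul {α : Type*} [MeasurableSpace α] {μ : Measure α}
    {g f : α → ℝ} (hg : AEStronglyMeasurable g μ) (hf : AEStronglyMeasurable f μ)
    (hgf : Integrable (fun a => g a * f a) μ) :
    Tendsto (fun n : ℕ => ∫ a, min (n : ℝ) (g a) * f a ∂μ) atTop (𝓝 (∫ a, g a * f a ∂μ)) := by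
  refine tendsto_integral_of_dominated_convergence (fun a => ‖g a * f a‖)
    (fun n => (aestronglyMeasurable_const.inf hg).mul hf) hgf.norm (fun n => ?_) ?_
  · refine ae_of_all μ fun a => ?_
    simp only [norm_mul, Real.norm_eq_abs]
    exact mul_le_mul_of_nonneg_right (abs_min_le_abs n.cast_nonneg) (abs_nonneg _)
  · refine ae_of_all μ fun a => tendsto_const_nhds.congr' ?_
    filter_upwards [tendsto_natCast_atTop_atTop.eventually_ge_atTop (g a)] with n hn
    rw [min_eq_right hn]

theorem scaled_tail_convergence_general
    (p : ℝ → ℝ)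
    (hp1 : ∫ β in Ioo (0:ℝ) 1, p β = 1)
    (t : ℝ) (ht : 0 < t) :
    Tendsto (fun n : ℕ => (n : ℝ) * ∫ β in Ioo (0:ℝ) 1, min 1 ((n : ℝ)⁻¹ * t ^ (-β)) * p β)
      atTop (nhds (∫ β in Ioo (0:ℝ) 1, t ^ (-β) * p β)) ∧
    IntegrableOn (fun β => t ^ (-β) * p β) (Ioo (0:ℝ) 1) := by
  have hp : IntegrableOn p (Ioo 0 1) := Integrable.of_integral_ne_zero (by simp [hp1])
  have hpow : Continuous fun β : ℝ => t ^ (-β) :=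
    continuous_const.rpow continuous_neg fun _ => Or.inl ht.ne'
  have hint : IntegrableOn (fun β => t ^ (-β) * p β) (Ioo 0 1) :=
    hp.continuousOn_mul_of_subset hpow.continuousOn isCompact_Icc measurableSet_Ioo
      Ioo_subset_Icc_self
  have hscaled : ∀ n : ℕ, (n : ℝ) * ∫ β in Ioo (0:ℝ) 1, min 1 ((n : ℝ)⁻¹ * t ^ (-β)) * p β =
      ∫ β in Ioo (0:ℝ) 1, min (n : ℝ) (t ^ (-β)) * p β := fun n => by
    simp only [← integral_const_mul, ← mul_assoc,
      mul_min_one_inv_mul n.cast_nonneg (Real.rpow_nonneg ht.le _)]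
  simp only [hscaled]
  exact ⟨tendsto_integral_min_natCast_mul hpow.aestronglyMeasurable hp.aestronglyMeasurable hint,
    hint⟩

/-- For a probability density `p` on `(0,1)`, the scaled tail
probabilities of the rescaled waiting times converge: for every `t > 0`,
`n · ∫₀¹ min(1, n⁻¹ t^(-β)) p β dβ → ∫₀¹ t^(-β) p β dβ` as `n → ∞`,
and the limit is finite. -/
theorem scaled_tail_convergence
    (p : ℝ → ℝ) (hpmeas : Measurable p)
    (hp0 : ∀ β ∈ Ioo (0:ℝ) 1, 0 ≤ p β)
    (hp1 : ∫ β in Ioo (0:ℝ) 1, p β = 1)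
    (t : ℝ) (ht : 0 < t) :
    Tendsto (fun n : ℕ => (n : ℝ) * ∫ β in Ioo (0:ℝ) 1, min 1 ((n : ℝ)⁻¹ * t ^ (-β)) * p β)
      atTop (nhds (∫ β in Ioo (0:ℝ) 1, t ^ (-β) * p β)) ∧
    IntegrableOn (fun β => t ^ (-β) * p β) (Ioo (0:ℝ) 1) :=
  scaled_tail_convergence_general p hp1 t ht
end

section
/- Let p : (0,1) → ℝ be a measurable probability density on (0,1) (p ≥ 0 and ∫₀¹ p(β) dβ = 1), and let k(t) = ∫₀¹ β t^{-β-1} p(β) dβ for t > 0. Then ∫₀^∞ min(1, t²) k(t) dt = ∫₀¹ (β/(2−β) + 1) p(β) dβ ≤ 2; in particular the measure ν(dt) = k(t) dt on (0,∞) satisfies the Lévy-measure integrability condition ∫₀^∞ min(1, t²) ν(dt) < ∞. -/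
/-!
For fixed `β ∈ (0, 2)` the truncated power `min 1 (t²) t^(-β-1)` is integrable on `(0, ∞)`:
splitting at `t = 1` gives `∫₀¹ t^(1-β) dt + ∫₁^∞ t^(-β-1) dt = 1/(2-β) + 1/β`. Hence the stable
density `β t^(-β-1)` contributes `β/(2-β) + 1`, a weight lying in `[0, 2]` for `β ∈ (0, 1)`. So for
any integrable `p` on `(0, 1)` the kernel `min 1 (t²) β t^(-β-1) p β` is absolutely integrable on
the product, Fubini exchanges the `t`- and `β`-integrals, and `p ≥ 0`, `∫ p = 1` give the bound `2`.
-/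

open MeasureTheory Set Function

lemma integral_Ioc_zero_one_rpow {a : ℝ} (ha : -1 < a) :
    ∫ t in Ioc (0 : ℝ) 1, t ^ a = 1 / (a + 1) := by
  rw [← intervalIntegral.integral_of_le zero_le_one, integral_rpow (Or.inl ha), Real.one_rpow,
    Real.zero_rpow (by linarith), sub_zero]

lemma integrableOn_Ioc_zero_one_rpow {a : ℝ} (ha : -1 < a) :
    IntegrableOn (fun t : ℝ => t ^ a) (Ioc 0 1) :=
  (intervalIntegrable_iff_integrableOn_Ioc_of_le zero_le_one).1
    (intervalIntegral.intervalIntegrable_rpow' ha)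

section TruncatedPower

variable {β : ℝ}

lemma min_one_sq_mul_rpow_of_le_one {t : ℝ} (ht : t ∈ Ioc (0 : ℝ) 1) :
    min 1 (t ^ 2) * t ^ (-β - 1) = t ^ (1 - β) := by
  rw [min_eq_right (pow_le_one₀ ht.1.le ht.2), ← Real.rpow_two, ← Real.rpow_add ht.1]
  ring_nf

lemma min_one_sq_mul_rpow_of_one_lt {t : ℝ} (ht : t ∈ Ioi (1 : ℝ)) :
    min 1 (t ^ 2) * t ^ (-β - 1) = t ^ (-β - 1) := by
  rw [min_eq_left (one_le_pow₀ (le_of_lt ht)), one_mul]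

lemma integrableOn_min_one_sq_mul_rpow (h0 : 0 < β) (h2 : β < 2) :
    IntegrableOn (fun t => min 1 (t ^ 2) * t ^ (-β - 1)) (Ioi (0 : ℝ)) := by
  rw [← Ioc_union_Ioi_eq_Ioi zero_le_one]
  refine IntegrableOn.union ?_ ?_
  · exact (integrableOn_Ioc_zero_one_rpow (by linarith)).congr_fun
      (fun t ht => (min_one_sq_mul_rpow_of_le_one ht).symm) measurableSet_Ioc
  · exact (integrableOn_Ioi_rpow_of_lt (by linarith) one_pos).congr_fun
      (fun t ht => (min_one_sq_mul_rpow_of_one_lt ht).symm) measurableSet_Ioi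

lemma integral_min_one_sq_mul_rpow (h0 : 0 < β) (h2 : β < 2) :
    ∫ t in Ioi (0 : ℝ), min 1 (t ^ 2) * t ^ (-β - 1) = 1 / (2 - β) + 1 / β := by
  have hint := integrableOn_min_one_sq_mul_rpow h0 h2
  rw [← Ioc_union_Ioi_eq_Ioi zero_le_one] at hint ⊢
  rw [setIntegral_union Ioc_disjoint_Ioi_same measurableSet_Ioi (hint.mono_set subset_union_left)
      (hint.mono_set subset_union_right),
    setIntegral_congr_fun measurableSet_Ioc (fun t ht => min_one_sq_mul_rpow_of_le_one ht),
    setIntegral_congr_fun measurableSet_Ioi (fun t ht => min_one_sq_mul_rpow_of_one_lt ht),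
    integral_Ioc_zero_one_rpow (by linarith), integral_Ioi_rpow_of_lt (by linarith) one_pos,
    Real.one_rpow]
  ring_nf

end TruncatedPower

lemma integral_min_one_sq_mul_stable_density {β : ℝ} (h0 : 0 < β) (h2 : β < 2) :
    ∫ t in Ioi (0 : ℝ), min 1 (t ^ 2) * (β * t ^ (-β - 1)) = β / (2 - β) + 1 := by
  simp_rw [mul_left_comm _ β, integral_const_mul, integral_min_one_sq_mul_rpow h0 h2]
  field_simp

lemma div_two_sub_add_one_mem_Icc {β : ℝ} (hβ : β ∈ Ioo (0 : ℝ) 1) :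
    β / (2 - β) + 1 ∈ Icc (0 : ℝ) 2 := by
  obtain ⟨h0, h1⟩ := hβ
  have h2 : 0 < 2 - β := by linarith
  constructor
  · positivity
  · linarith [(div_le_one h2).2 (by linarith : β ≤ 2 - β)]

section Mixture

variable {p : ℝ → ℝ}

lemma integrableOn_div_two_sub_add_one_mul (hp : IntegrableOn p (Ioo 0 1)) :
    IntegrableOn (fun β => (β / (2 - β) + 1) * p β) (Ioo 0 1) := by
  have hmeas : Measurable fun β : ℝ => β / (2 - β) + 1 := by fun_prop
  refine hp.bdd_mul (c := 2) hmeas.aestronglyMeasurable ?_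
  filter_upwards [ae_restrict_mem measurableSet_Ioo] with β hβ
  obtain ⟨h0, h2⟩ := div_two_sub_add_one_mem_Icc hβ
  rwa [Real.norm_eq_abs, abs_of_nonneg h0]

lemma integrable_min_one_sq_mul_mixture (hpm : Measurable p) (hp : IntegrableOn p (Ioo 0 1)) :
    Integrable (uncurry fun t β => min 1 (t ^ 2) * (β * t ^ (-β - 1) * p β))
      ((volume.restrict (Ioi 0)).prod (volume.restrict (Ioo 0 1))) := by
  have hmeas :
      Measurable (uncurry fun t β : ℝ => min 1 (t ^ 2) * (β * t ^ (-β - 1) * p β)) := by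
    fun_prop
  rw [integrable_prod_iff' hmeas.aestronglyMeasurable]
  constructor
  · filter_upwards [ae_restrict_mem measurableSet_Ioo] with β hβ
    refine (((integrableOn_min_one_sq_mul_rpow hβ.1 (by linarith [hβ.2])).const_mul β).mul_const
      (p β)).congr (ae_of_all _ fun t => ?_)
    simp only [uncurry]
    ring
  · have hnorm : ∀ β ∈ Ioo (0 : ℝ) 1,
        ∫ t in Ioi (0 : ℝ), ‖min 1 (t ^ 2) * (β * t ^ (-β - 1) * p β)‖ =
          (β / (2 - β) + 1) * ‖p β‖ := by
      intro β hβ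
      rw [← integral_min_one_sq_mul_stable_density hβ.1 (by linarith [hβ.2]), ← integral_mul_const]
      refine setIntegral_congr_fun measurableSet_Ioi fun t ht => ?_
      have hpow : 0 ≤ t ^ (-β - 1) := Real.rpow_nonneg (le_of_lt ht) _
      simp only [norm_mul, Real.norm_eq_abs, abs_of_nonneg hβ.1.le, abs_of_nonneg hpow,
        abs_of_nonneg (le_min zero_le_one (sq_nonneg t))]
      ring
    refine (integrableOn_div_two_sub_add_one_mul hp.norm).congr ?_
    filter_upwards [ae_restrict_mem measurableSet_Ioo] with β hβ
    exact (hnorm β hβ).symm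

lemma integral_min_one_sq_mul_mixture (hpm : Measurable p) (hp : IntegrableOn p (Ioo 0 1)) :
    ∫ t in Ioi (0 : ℝ), ∫ β in Ioo (0 : ℝ) 1, min 1 (t ^ 2) * (β * t ^ (-β - 1) * p β) =
      ∫ β in Ioo (0 : ℝ) 1, (β / (2 - β) + 1) * p β := by
  rw [integral_integral_swap (integrable_min_one_sq_mul_mixture hpm hp)]
  refine setIntegral_congr_fun measurableSet_Ioo fun β hβ => ?_
  rw [← integral_min_one_sq_mul_stable_density hβ.1 (by linarith [hβ.2]), ← integral_mul_const]
  simp only [mul_assoc]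

lemma integral_div_two_sub_add_one_mul_le (hp0 : ∀ β ∈ Ioo (0 : ℝ) 1, 0 ≤ p β)
    (hp : IntegrableOn p (Ioo 0 1)) :
    ∫ β in Ioo (0 : ℝ) 1, (β / (2 - β) + 1) * p β ≤ 2 * ∫ β in Ioo (0 : ℝ) 1, p β := by
  rw [← integral_const_mul]
  exact setIntegral_mono_on (integrableOn_div_two_sub_add_one_mul hp) (hp.const_mul 2)
    measurableSet_Ioo fun β hβ =>
      mul_le_mul_of_nonneg_right (div_two_sub_add_one_mem_Icc hβ).2 (hp0 β hβ)

end Mixture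

/-- For a probability density `p` on `(0,1)` and
`k t = ∫₀¹ β t^(-β-1) p β dβ`, we have
`∫₀^∞ min(1, t²) k t dt = ∫₀¹ (β/(2−β) + 1) p β dβ ≤ 2`; in particular the measure
`ν(dt) = k t dt` satisfies the Lévy-measure integrability condition. -/
theorem distributed_order_levy_measure_integrability
    (p : ℝ → ℝ) (hpmeas : Measurable p)
    (hp0 : ∀ β ∈ Ioo (0:ℝ) 1, 0 ≤ p β)
    (hp1 : ∫ β in Ioo (0:ℝ) 1, p β = 1)
    (k : ℝ → ℝ) (hk : ∀ t, k t = ∫ β in Ioo (0:ℝ) 1, β * t ^ (-β - 1) * p β) :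
    (∫ t in Ioi (0:ℝ), min 1 (t ^ 2) * k t)
      = ∫ β in Ioo (0:ℝ) 1, (β / (2 - β) + 1) * p β ∧
    (∫ β in Ioo (0:ℝ) 1, (β / (2 - β) + 1) * p β) ≤ 2 ∧
    IntegrableOn (fun t => min 1 (t ^ 2) * k t) (Ioi (0:ℝ)) := by
  have hp : IntegrableOn p (Ioo 0 1) :=
    Integrable.of_integral_ne_zero (by rw [hp1]; exact one_ne_zero)
  have hmix : (fun t => min 1 (t ^ 2) * k t) =
      fun t => ∫ β in Ioo (0 : ℝ) 1, min 1 (t ^ 2) * (β * t ^ (-β - 1) * p β) := by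
    ext t
    rw [hk, integral_const_mul]
  refine ⟨?_, (integral_div_two_sub_add_one_mul_le hp0 hp).trans_eq (by rw [hp1, mul_one]), ?_⟩
  · simp only [hmix, integral_min_one_sq_mul_mixture hpmeas hp]
  · rw [IntegrableOn, hmix]
    exact (integrable_min_one_sq_mul_mixture hpmeas hp).integral_prod_left
end

section
/- Let 0 < α < 1 and let z ∈ ℂ with Re z > 0. Then the improper integral ∫₀^∞ (1 − e^{−z t}) · (α / Γ(1−α)) · t^{−α−1} dt converges and equals z^α (principal branch of the complex power). In particular, for s > 0, k ∈ ℝ^d and a unit vector u ∈ ℝ^d, taking z = s − i⟨k,u⟩ gives ∫₀^∞ (1 − e^{(i⟨k,u⟩ − s) t}) (α/Γ(1−α)) t^{−α−1} dt = (s − i⟨k,u⟩)^α. -/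
/-!
Integrating by parts against `t ^ (-α)` turns `∫₀^∞ (1 - e^{-zt}) α t^{-α-1} dt` into
`z ∫₀^∞ t^{-α} e^{-zt} dt`; the boundary terms vanish because `‖1 - e^{-zt}‖ ≤ min (‖z‖ t) 2`.
For real `z > 0` the last integral is `Γ(1-α) z^{α-1}` by rescaling Euler's integral, and both
sides are holomorphic on `Re z > 0`, so the identity theorem extends this to all such `z`.
-/

open MeasureTheory Set Real Filter Topology
open scoped Complex

theorem norm_one_sub_cexp_neg_le {w : ℂ} (hw : 0 ≤ w.re) : ‖1 - cexp (-w)‖ ≤ ‖w‖ := by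
  have hderiv : ∀ x ∈ Icc (0 : ℝ) 1,
      HasDerivWithinAt (fun x : ℝ => cexp (-(x * w))) (-w * cexp (-(x * w))) (Icc 0 1) x := by
    intro x _
    have := ((hasDerivAt_id (x : ℂ)).mul_const w).neg.cexp.comp_ofReal
    simpa [mul_comm] using this.hasDerivWithinAt
  have hbound : ∀ x ∈ Ico (0 : ℝ) 1, ‖-w * cexp (-(x * w))‖ ≤ ‖w‖ := by
    intro x hx
    rw [norm_mul, norm_neg, Complex.norm_exp]
    refine mul_le_of_le_one_right (norm_nonneg w) (Real.exp_le_one_iff.mpr ?_)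
    simpa using mul_nonneg hx.1 hw
  simpa [norm_sub_rev] using
    norm_image_sub_le_of_norm_deriv_le_segment' hderiv hbound 1 (right_mem_Icc.mpr zero_le_one)

theorem norm_one_sub_cexp_neg_le_two {w : ℂ} (hw : 0 ≤ w.re) : ‖1 - cexp (-w)‖ ≤ 2 := by
  have : ‖cexp (-w)‖ ≤ 1 := by
    rw [Complex.norm_exp, Real.exp_le_one_iff, Complex.neg_re]
    linarith
  calc ‖1 - cexp (-w)‖ ≤ ‖(1 : ℂ)‖ + ‖cexp (-w)‖ := norm_sub_le _ _
    _ ≤ 2 := by rw [norm_one]; linarith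

theorem norm_one_sub_cexp_neg_mul_mul_rpow_le {z : ℂ} (hz : 0 ≤ z.re) {t : ℝ} (ht : 0 < t)
    (s : ℝ) :
    ‖(1 - cexp (-z * t)) * ((t ^ s : ℝ) : ℂ)‖ ≤ min (‖z‖ * t ^ (s + 1)) (2 * t ^ s) := by
  have hzt : 0 ≤ (z * t).re := by simpa using mul_nonneg hz ht.le
  rw [norm_mul, Complex.norm_real, Real.norm_of_nonneg (rpow_nonneg ht.le s), neg_mul]
  refine le_min ?_ (mul_le_mul_of_nonneg_right (norm_one_sub_cexp_neg_le_two hzt)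
    (rpow_nonneg ht.le s))
  calc ‖1 - cexp (-(z * t))‖ * t ^ s ≤ ‖z * t‖ * t ^ s :=
        mul_le_mul_of_nonneg_right (norm_one_sub_cexp_neg_le hzt) (rpow_nonneg ht.le s)
    _ = ‖z‖ * t ^ (s + 1) := by
        rw [norm_mul, Complex.norm_real, Real.norm_of_nonneg ht.le, rpow_add_one ht.ne']; ring

theorem continuousOn_rpow_mul_cexp_neg_mul (s : ℝ) (z : ℂ) :
    ContinuousOn (fun t : ℝ => ((t ^ s : ℝ) : ℂ) * cexp (-z * t)) (Ioi 0) := by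
  have := continuousOn_id.rpow_const (s := Ioi (0 : ℝ)) (p := s) fun t ht => Or.inl ht.ne'
  fun_prop

theorem continuousOn_one_sub_cexp_neg_mul_mul_rpow (s : ℝ) (z : ℂ) :
    ContinuousOn (fun t : ℝ => (1 - cexp (-z * t)) * ((t ^ s : ℝ) : ℂ)) (Ioi 0) := by
  have := continuousOn_id.rpow_const (s := Ioi (0 : ℝ)) (p := s) fun t ht => Or.inl ht.ne'
  fun_prop

theorem integrableOn_rpow_mul_cexp_neg_mul {s : ℝ} (hs : -1 < s) {z : ℂ} (hz : 0 < z.re) :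
    IntegrableOn (fun t : ℝ => ((t ^ s : ℝ) : ℂ) * cexp (-z * t)) (Ioi 0) := by
  refine Integrable.mono' (integrableOn_rpow_mul_exp_neg_mul_rpow hs zero_lt_one hz)
    ((continuousOn_rpow_mul_cexp_neg_mul s z).aestronglyMeasurable measurableSet_Ioi) ?_
  refine (ae_restrict_iff' measurableSet_Ioi).mpr (ae_of_all _ fun t (ht : 0 < t) => ?_)
  rw [norm_mul, Complex.norm_real, Real.norm_of_nonneg (rpow_nonneg ht.le s), Complex.norm_exp,
    rpow_one]
  simp

theorem integrableOn_one_sub_cexp_neg_mul_mul_rpow {s : ℝ} (hs₁ : -2 < s) (hs₂ : s < -1) {z : ℂ}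
    (hz : 0 ≤ z.re) :
    IntegrableOn (fun t : ℝ => (1 - cexp (-z * t)) * ((t ^ s : ℝ) : ℂ)) (Ioi 0) := by
  have hmeas : ∀ I ⊆ Ioi (0 : ℝ), MeasurableSet I → AEStronglyMeasurable
      (fun t : ℝ => (1 - cexp (-z * t)) * ((t ^ s : ℝ) : ℂ)) (volume.restrict I) := fun I hI hIm =>
    ((continuousOn_one_sub_cexp_neg_mul_mul_rpow s z).mono hI).aestronglyMeasurable hIm
  rw [← Ioc_union_Ioi_eq_Ioi zero_le_one, integrableOn_union]
  constructor
  · have hbound : IntegrableOn (fun t : ℝ => ‖z‖ * t ^ (s + 1)) (Ioc 0 1) :=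
      ((intervalIntegrable_iff_integrableOn_Ioc_of_le zero_le_one).mp
        (intervalIntegral.intervalIntegrable_rpow' (by linarith))).const_mul _
    refine hbound.mono' (hmeas _ (fun t ht => ht.1) measurableSet_Ioc) ?_
    refine (ae_restrict_iff' measurableSet_Ioc).mpr (ae_of_all _ fun t ht => ?_)
    exact (norm_one_sub_cexp_neg_mul_mul_rpow_le hz ht.1 s).trans (min_le_left _ _)
  · have hbound : IntegrableOn (fun t : ℝ => 2 * t ^ s) (Ioi 1) :=
      (integrableOn_Ioi_rpow_of_lt hs₂ zero_lt_one).const_mul 2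
    refine hbound.mono' (hmeas _ (fun t (ht : 1 < t) => zero_lt_one.trans ht) measurableSet_Ioi) ?_
    refine (ae_restrict_iff' measurableSet_Ioi).mpr (ae_of_all _ fun t (ht : 1 < t) => ?_)
    exact (norm_one_sub_cexp_neg_mul_mul_rpow_le hz (zero_lt_one.trans ht) s).trans
      (min_le_right _ _)

theorem differentiableOn_integral_rpow_mul_cexp_neg_mul {s : ℝ} (hs : -1 < s) :
    DifferentiableOn ℂ (fun z : ℂ => ∫ t in Ioi (0 : ℝ), ((t ^ s : ℝ) : ℂ) * cexp (-z * t))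
      {z | 0 < z.re} := by
  intro z₀ (hz₀ : 0 < z₀.re)
  set ε := z₀.re / 2 with hε_def
  have hε : 0 < ε := half_pos hz₀
  have hre : ∀ z ∈ Metric.ball z₀ ε, ε < z.re := fun z hz => by
    have h := (abs_lt.mp ((Complex.abs_re_le_norm (z - z₀)).trans_lt (mem_ball_iff_norm.mp hz))).1
    simp only [Complex.sub_re] at h
    linarith
  have hbound : ∀ᵐ t ∂volume.restrict (Ioi (0 : ℝ)), ∀ z ∈ Metric.ball z₀ ε,
      ‖-(((t ^ (s + 1) : ℝ) : ℂ) * cexp (-z * t))‖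
        ≤ t ^ (s + 1) * Real.exp (-ε * t ^ (1 : ℝ)) := by
    refine (ae_restrict_iff' measurableSet_Ioi).mpr (ae_of_all _ fun t (ht : 0 < t) z hz => ?_)
    rw [norm_neg, norm_mul, Complex.norm_real, Real.norm_of_nonneg (rpow_nonneg ht.le _),
      Complex.norm_exp, rpow_one]
    gcongr
    simpa using mul_le_mul_of_nonneg_right (hre z hz).le ht.le
  have hderiv : ∀ᵐ t ∂volume.restrict (Ioi (0 : ℝ)), ∀ z ∈ Metric.ball z₀ ε,
      HasDerivAt (fun z : ℂ => ((t ^ s : ℝ) : ℂ) * cexp (-z * t))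
        (-(((t ^ (s + 1) : ℝ) : ℂ) * cexp (-z * t))) z := by
    refine (ae_restrict_iff' measurableSet_Ioi).mpr (ae_of_all _ fun t (ht : 0 < t) z _ => ?_)
    refine (((hasDerivAt_neg z).mul_const (t : ℂ)).cexp.const_mul ((t ^ s : ℝ) : ℂ)).congr_deriv ?_
    rw [rpow_add_one ht.ne']
    push_cast
    ring
  exact (hasDerivAt_integral_of_dominated_loc_of_deriv_le (Metric.ball_mem_nhds z₀ hε)
    (Eventually.of_forall fun z =>
      (continuousOn_rpow_mul_cexp_neg_mul s z).aestronglyMeasurable measurableSet_Ioi)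
    (integrableOn_rpow_mul_cexp_neg_mul hs hz₀)
    (integrableOn_rpow_mul_cexp_neg_mul (by linarith) hz₀).neg.aestronglyMeasurable
    hbound (integrableOn_rpow_mul_exp_neg_mul_rpow (by linarith) zero_lt_one hε)
    hderiv).2.differentiableAt.differentiableWithinAt

theorem integral_rpow_mul_cexp_neg_ofReal_mul {s : ℝ} (hs : -1 < s) {r : ℝ} (hr : 0 < r) :
    ∫ t in Ioi (0 : ℝ), ((t ^ s : ℝ) : ℂ) * cexp (-r * t)
      = Real.Gamma (s + 1) / (r : ℂ) ^ ((s : ℂ) + 1) := by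
  have h := Real.integral_rpow_mul_exp_neg_mul_Ioi (a := s + 1) (by linarith) hr
  rw [add_sub_cancel_right, one_div, inv_rpow hr.le, inv_mul_eq_div] at h
  rw [show ((s : ℂ) + 1) = ((s + 1 : ℝ) : ℂ) by push_cast; ring, ← Complex.ofReal_cpow hr.le,
    ← Complex.ofReal_div, ← h, ← integral_complex_ofReal]
  refine setIntegral_congr_fun measurableSet_Ioi fun t _ => ?_
  push_cast
  ring_nf

theorem integral_rpow_mul_cexp_neg_mul {s : ℝ} (hs : -1 < s) {z : ℂ} (hz : 0 < z.re) :
    ∫ t in Ioi (0 : ℝ), ((t ^ s : ℝ) : ℂ) * cexp (-z * t)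
      = Real.Gamma (s + 1) / z ^ ((s : ℂ) + 1) := by
  have hU : IsOpen {z : ℂ | 0 < z.re} := isOpen_lt continuous_const Complex.continuous_re
  have hrhs : DifferentiableOn ℂ (fun z : ℂ => Real.Gamma (s + 1) / z ^ ((s : ℂ) + 1))
      {z | 0 < z.re} := fun z (hz : 0 < z.re) =>
    have hz0 : z ≠ 0 := fun h => by simp [h] at hz
    ((differentiableAt_const _).div (differentiableAt_id.cpow_const (Or.inl hz))
      (by simp [Complex.cpow_eq_zero_iff, hz0])).differentiableWithinAt
  have hofReal : Tendsto ((↑) : ℝ → ℂ) (𝓝[>] 1) (𝓝[≠] ((1 : ℝ) : ℂ)) :=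
    Complex.continuous_ofReal.continuousWithinAt.tendsto_nhdsWithin fun r (hr : 1 < r) =>
      by simpa using hr.ne'
  refine ((differentiableOn_integral_rpow_mul_cexp_neg_mul hs).analyticOnNhd hU)
    |>.eqOn_of_preconnected_of_frequently_eq (hrhs.analyticOnNhd hU)
      (convex_halfSpace_re_gt 0).isPreconnected (z₀ := ((1 : ℝ) : ℂ)) (by simp) ?_ hz
  have hreal : ∀ᶠ r : ℝ in 𝓝[>] 1, ∫ t in Ioi (0 : ℝ), ((t ^ s : ℝ) : ℂ) * cexp (-r * t)
      = Real.Gamma (s + 1) / (r : ℂ) ^ ((s : ℂ) + 1) :=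
    eventually_mem_nhdsWithin.mono fun r hr =>
      integral_rpow_mul_cexp_neg_ofReal_mul hs (zero_lt_one.trans hr)
  exact hofReal.frequently hreal.frequently

theorem integral_one_sub_cexp_neg_mul_mul_rpow {α : ℝ} (hα₀ : 0 < α) (hα₁ : α < 1) {z : ℂ}
    (hz : 0 < z.re) :
    α * ∫ t in Ioi (0 : ℝ), (1 - cexp (-z * t)) * ((t ^ (-α - 1) : ℝ) : ℂ)
      = z * ∫ t in Ioi (0 : ℝ), ((t ^ (-α) : ℝ) : ℂ) * cexp (-z * t) := by
  set f : ℝ → ℂ := fun t => (1 - cexp (-z * t)) * ((t ^ (-α) : ℝ) : ℂ)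
  have hint₁ := (integrableOn_one_sub_cexp_neg_mul_mul_rpow (s := -α - 1) (by linarith)
    (by linarith) hz.le).const_mul (α : ℂ)
  have hint₂ := (integrableOn_rpow_mul_cexp_neg_mul (s := -α) (by linarith) hz).const_mul z
  have hderiv : ∀ t ∈ Ioi (0 : ℝ), HasDerivAt f (z * (((t ^ (-α) : ℝ) : ℂ) * cexp (-z * t))
      - α * ((1 - cexp (-z * t)) * ((t ^ (-α - 1) : ℝ) : ℂ))) t := by
    intro t (ht : 0 < t)
    have hexp := (((hasDerivAt_id (t : ℂ)).const_mul (-z)).cexp).comp_ofReal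
    have hpow := (Real.hasDerivAt_rpow_const (p := -α) (Or.inl ht.ne')).ofReal_comp
    refine (((hasDerivAt_const t (1 : ℂ)).sub hexp).mul hpow).congr_deriv ?_
    simp only [id, Pi.sub_apply]
    push_cast
    ring
  have hzero : Tendsto f (𝓝[>] 0) (𝓝 0) := by
    have hbound : Tendsto (fun t : ℝ => ‖z‖ * t ^ (-α + 1)) (𝓝[>] 0) (𝓝 0) := by
      have := (Real.continuousAt_rpow_const 0 (-α + 1) (Or.inr (by linarith))).tendsto
      simpa [Real.zero_rpow (by linarith : -α + 1 ≠ 0)] using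
        (this.const_mul ‖z‖).mono_left nhdsWithin_le_nhds
    refine squeeze_zero_norm' ?_ hbound
    filter_upwards [self_mem_nhdsWithin] with t (ht : 0 < t)
    exact (norm_one_sub_cexp_neg_mul_mul_rpow_le hz.le ht _).trans (min_le_left _ _)
  have htop : Tendsto f atTop (𝓝 0) := by
    refine squeeze_zero_norm' ?_ (by simpa using (tendsto_rpow_neg_atTop hα₀).const_mul 2)
    filter_upwards [eventually_gt_atTop 0] with t ht
    exact (norm_one_sub_cexp_neg_mul_mul_rpow_le hz.le ht _).trans (min_le_right _ _)
  have hf₀ : f 0 = 0 := by simp [f]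
  have h := integral_Ioi_of_hasDerivAt_of_tendsto
    (continuousWithinAt_Ioi_iff_Ici.mp (by rw [ContinuousWithinAt, hf₀]; exact hzero)) hderiv
    (hint₂.sub hint₁) htop
  rw [integral_sub hint₂ hint₁, integral_const_mul, integral_const_mul, hf₀, sub_zero] at h
  exact (sub_eq_zero.mp h).symm

noncomputable def stableLevyDensity (α t : ℝ) : ℝ :=
  α / Real.Gamma (1 - α) * t ^ (-α - 1)

theorem integrableOn_one_sub_cexp_neg_mul_mul_stableLevyDensity {α : ℝ} (hα₀ : 0 < α)
    (hα₁ : α < 1) {z : ℂ} (hz : 0 ≤ z.re) :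
    IntegrableOn (fun t : ℝ => (1 - cexp (-z * t)) * (stableLevyDensity α t : ℂ)) (Ioi 0) := by
  refine IntegrableOn.congr_fun ((integrableOn_one_sub_cexp_neg_mul_mul_rpow (s := -α - 1)
    (by linarith) (by linarith) hz).const_mul ((α / Real.Gamma (1 - α) : ℝ) : ℂ))
    (fun t _ => ?_) measurableSet_Ioi
  simp only [stableLevyDensity]
  push_cast
  ring

theorem integral_one_sub_cexp_neg_mul_mul_stableLevyDensity {α : ℝ} (hα₀ : 0 < α) (hα₁ : α < 1)
    {z : ℂ} (hz : 0 < z.re) :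
    ∫ t in Ioi (0 : ℝ), (1 - cexp (-z * t)) * (stableLevyDensity α t : ℂ) = z ^ (α : ℂ) := by
  have hz₀ : z ≠ 0 := fun h => by simp [h] at hz
  have hΓ : (Real.Gamma (1 - α) : ℂ) ≠ 0 :=
    Complex.ofReal_ne_zero.mpr (Real.Gamma_pos_of_pos (by linarith)).ne'
  have hpow : z ^ (α : ℂ) * z ^ (((-α : ℝ) : ℂ) + 1) = z := by
    rw [← Complex.cpow_add _ _ hz₀]
    push_cast
    ring_nf
    exact Complex.cpow_one z
  have hpow₀ : z ^ (((-α : ℝ) : ℂ) + 1) ≠ 0 := by simp [Complex.cpow_eq_zero_iff, hz₀]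
  calc ∫ t in Ioi (0 : ℝ), (1 - cexp (-z * t)) * (stableLevyDensity α t : ℂ)
      = (Real.Gamma (1 - α) : ℂ)⁻¹ *
          (α * ∫ t in Ioi (0 : ℝ), (1 - cexp (-z * t)) * ((t ^ (-α - 1) : ℝ) : ℂ)) := by
        rw [← mul_assoc, ← integral_const_mul]
        refine setIntegral_congr_fun measurableSet_Ioi fun t _ => ?_
        simp only [stableLevyDensity]
        push_cast
        ring
    _ = (Real.Gamma (1 - α) : ℂ)⁻¹ * (z * (Real.Gamma (-α + 1) / z ^ (((-α : ℝ) : ℂ) + 1))) := by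
        rw [integral_one_sub_cexp_neg_mul_mul_rpow hα₀ hα₁ hz,
          integral_rpow_mul_cexp_neg_mul (by linarith) hz]
    _ = z ^ (α : ℂ) := by
        rw [neg_add_eq_sub]
        nth_rw 1 [← hpow]
        field_simp

/-- For `0 < α < 1` and `z ∈ ℂ` with `Re z > 0`, the integral
`∫₀^∞ (1 − e^{−z t}) (α/Γ(1−α)) t^(−α−1) dt` converges and equals `z^α` (principal
branch). In particular, for `s > 0`, `k ∈ ℝ^d` and a unit vector `u`, taking
`z = s − i⟨k,u⟩` gives
`∫₀^∞ (1 − e^{(i⟨k,u⟩ − s) t}) (α/Γ(1−α)) t^(−α−1) dt = (s − i⟨k,u⟩)^α`. -/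
theorem stable_levy_exponent (α : ℝ) (hα0 : 0 < α) (hα1 : α < 1)
    (z : ℂ) (hz : 0 < z.re) :
    (IntegrableOn
        (fun t : ℝ => (1 - Complex.exp (-z * t)) * ((α / Real.Gamma (1 - α) * t ^ (-α - 1) : ℝ) : ℂ))
        (Ioi (0:ℝ)) ∧
      (∫ t in Ioi (0:ℝ),
          (1 - Complex.exp (-z * t)) * ((α / Real.Gamma (1 - α) * t ^ (-α - 1) : ℝ) : ℂ))
        = z ^ (α : ℂ)) ∧
    ∀ (d : ℕ) (s : ℝ), 0 < s → ∀ (k u : EuclideanSpace ℝ (Fin d)), ‖u‖ = 1 →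
      (∫ t in Ioi (0:ℝ),
          (1 - Complex.exp ((Complex.I * ((inner ℝ k u : ℝ) : ℂ) - (s : ℂ)) * t)) *
            ((α / Real.Gamma (1 - α) * t ^ (-α - 1) : ℝ) : ℂ))
        = ((s : ℂ) - Complex.I * ((inner ℝ k u : ℝ) : ℂ)) ^ (α : ℂ) := by
  refine ⟨⟨integrableOn_one_sub_cexp_neg_mul_mul_stableLevyDensity hα0 hα1 hz.le,
    integral_one_sub_cexp_neg_mul_mul_stableLevyDensity hα0 hα1 hz⟩, fun d s hs k u _ => ?_⟩
  have hre : 0 < ((s : ℂ) - Complex.I * ((inner ℝ k u : ℝ) : ℂ)).re := by simpa using hs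
  rw [← neg_sub (s : ℂ)]
  exact integral_one_sub_cexp_neg_mul_mul_stableLevyDensity hα0 hα1 hre
end

section
/- Let γ > 0 and let p : (0,1) → ℝ be a measurable probability density on (0,1) (p ≥ 0 and ∫₀¹ p(β) dβ = 1) that is strictly positive on some interval (0,ε) and regularly varying at zero with exponent γ−1, i.e., for every λ > 0, lim_{x→0⁺} p(λx)/p(x) = λ^{γ−1}. Define Ψ(t) = ∫₀¹ t^{−β} p(β) dβ for t > 0. Then Ψ is slowly varying at infinity: for every λ > 0, lim_{t→∞} Ψ(λt)/Ψ(t) = 1. (Hence the tail of the distributed-order waiting time distribution decays slower than any power of t, giving rise to ultraslow diffusion.) -/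
/-!
Write `Ψ (l * t) / Ψ t` as the average of `β ↦ l ^ (-β)` against the probability weights
`t ^ (-β) * p β / Ψ t` on `(0, 1)`. As `t → ∞` the factor `t ^ (-β)` damps the mass on `[δ, 1)`
like `t ^ (-δ)` but the mass on `(0, δ / 2)` only like `t ^ (-δ / 2)`, and `p` has positive mass
near `0`; so these weights concentrate at `β = 0` and the averages of the bounded continuous
function `l ^ (-β)` tend to its value `1` at `0`.
-/

open MeasureTheory Filter Set Topology

section

variable {μ : Measure ℝ} {s : Set ℝ} {p : ℝ → ℝ}

theorem abs_setIntegral_mul_le_of_small_near_zero {g w : ℝ → ℝ} {η K δ : ℝ}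
    (hs : MeasurableSet s) (hw0 : ∀ β ∈ s, 0 ≤ w β) (hw : IntegrableOn w s μ)
    (hgw : IntegrableOn (fun β => g β * w β) s μ) (hη0 : 0 ≤ η)
    (hη : ∀ β ∈ s, β < δ → |g β| ≤ η) (hK : ∀ β ∈ s, |g β| ≤ K) :
    |∫ β in s, g β * w β ∂μ| ≤ η * ∫ β in s, w β ∂μ + K * ∫ β in s ∩ Ici δ, w β ∂μ := by
  have hind : IntegrableOn ((Ici δ).indicator w) s μ := hw.indicator measurableSet_Ici
  calc |∫ β in s, g β * w β ∂μ| ≤ ∫ β in s, |g β * w β| ∂μ := abs_integral_le_integral_abs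
    _ ≤ ∫ β in s, (η * w β + K * (Ici δ).indicator w β) ∂μ := by
        refine setIntegral_mono_on hgw.abs ((hw.const_mul η).add (hind.const_mul K)) hs
          fun β hβ => ?_
        rw [abs_mul, abs_of_nonneg (hw0 β hβ)]
        by_cases hβδ : β < δ
        · rw [indicator_of_notMem (by simpa using hβδ), mul_zero, add_zero]
          exact mul_le_mul_of_nonneg_right (hη β hβ hβδ) (hw0 β hβ)
        · rw [indicator_of_mem (by simpa using hβδ)]
          nlinarith [mul_le_mul_of_nonneg_right (hK β hβ) (hw0 β hβ), mul_nonneg hη0 (hw0 β hβ)]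
    _ = η * ∫ β in s, w β ∂μ + K * ∫ β in s ∩ Ici δ, w β ∂μ := by
        rw [integral_add (hw.const_mul η) (hind.const_mul K), integral_const_mul,
          integral_const_mul, setIntegral_indicator measurableSet_Ici]

theorem tendsto_setIntegral_mul_div_of_tendsto_tail {ι : Type*} {L : Filter ι}
    {w : ι → ℝ → ℝ} {g : ℝ → ℝ} {b : ℝ} (hs : MeasurableSet s) (hsb : s ⊆ Icc 0 b)
    (hg : Continuous g) (hw0 : ∀ᶠ i in L, ∀ β ∈ s, 0 ≤ w i β)
    (hw : ∀ᶠ i in L, IntegrableOn (w i) s μ) (hpos : ∀ᶠ i in L, 0 < ∫ β in s, w i β ∂μ)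
    (htail : ∀ δ > 0,
      Tendsto (fun i => (∫ β in s ∩ Ici δ, w i β ∂μ) / ∫ β in s, w i β ∂μ) L (𝓝 0)) :
    Tendsto (fun i => (∫ β in s, g β * w i β ∂μ) / ∫ β in s, w i β ∂μ) L (𝓝 (g 0)) := by
  obtain ⟨K, hK⟩ := (isCompact_Icc (a := 0) (b := b)).exists_bound_of_continuousOn hg.continuousOn
  have hgK : ∀ β ∈ s, |g β - g 0| ≤ K + |g 0| := fun β hβ =>
    (abs_sub _ _).trans (by gcongr; exact hK β (hsb hβ))
  rw [Metric.tendsto_nhds]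
  intro ε hε
  obtain ⟨δ, hδ, hgδ⟩ := Metric.continuous_iff.1 hg 0 (ε / 2) (half_pos hε)
  have hsmall : ∀ᶠ i in L,
      (K + |g 0|) * ((∫ β in s ∩ Ici δ, w i β ∂μ) / ∫ β in s, w i β ∂μ) < ε / 2 := by
    have h := (htail δ hδ).const_mul (K + |g 0|)
    rw [mul_zero] at h
    exact h.eventually (gt_mem_nhds (half_pos hε))
  filter_upwards [hw0, hw, hpos, hsmall] with i hw0 hw hpos hsmall
  have hgw : IntegrableOn (fun β => g β * w i β) s μ :=
    hw.bdd_mul hg.aestronglyMeasurable (ae_restrict_of_forall_mem hs fun β hβ => hK β (hsb hβ))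
  have hgw' : IntegrableOn (fun β => (g β - g 0) * w i β) s μ := by
    simp only [sub_mul]
    exact hgw.sub (hw.const_mul (g 0))
  have hdiff : (∫ β in s, g β * w i β ∂μ) / (∫ β in s, w i β ∂μ) - g 0
      = (∫ β in s, (g β - g 0) * w i β ∂μ) / ∫ β in s, w i β ∂μ := by
    simp only [sub_mul]
    rw [integral_sub hgw (hw.const_mul _), integral_const_mul]
    field_simp
  have hbound := abs_setIntegral_mul_le_of_small_near_zero hs hw0 hw hgw' (half_pos hε).le
    (fun β hβ hβδ => (hgδ β (by rwa [Real.dist_eq, sub_zero, abs_of_nonneg (hsb hβ).1])).le) hgK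
  rw [mul_div_assoc', div_lt_iff₀ hpos] at hsmall
  rw [Real.dist_eq, hdiff, abs_div, abs_of_pos hpos, div_lt_iff₀ hpos]
  linarith

theorem integrableOn_rpow_neg_mul {t : ℝ} (ht : 1 ≤ t) (hs : MeasurableSet s)
    (hs0 : s ⊆ Ici 0) (hp : IntegrableOn p s μ) :
    IntegrableOn (fun β => t ^ (-β) * p β) s μ :=
  hp.bdd_mul (c := 1)
    ((Real.continuous_const_rpow (zero_lt_one.trans_le ht).ne').comp
      continuous_neg).aestronglyMeasurable
    (ae_restrict_of_forall_mem hs fun β hβ => by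
      rw [Real.norm_of_nonneg (Real.rpow_nonneg (zero_le_one.trans ht) _)]
      exact Real.rpow_le_one_of_one_le_of_nonpos ht (neg_nonpos.2 (hs0 hβ)))

theorem setIntegral_rpow_neg_mul_le {t δ : ℝ} (ht : 1 ≤ t) (hδ : 0 ≤ δ) (hs : MeasurableSet s)
    (hsδ : s ⊆ Ici δ) (hp0 : ∀ β ∈ s, 0 ≤ p β) (hp : IntegrableOn p s μ) :
    ∫ β in s, t ^ (-β) * p β ∂μ ≤ t ^ (-δ) * ∫ β in s, p β ∂μ := by
  rw [← integral_const_mul]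
  refine setIntegral_mono_on (integrableOn_rpow_neg_mul ht hs (hsδ.trans (Ici_subset_Ici.2 hδ)) hp)
    (hp.const_mul _) hs fun β hβ => ?_
  exact mul_le_mul_of_nonneg_right
    (Real.rpow_le_rpow_of_exponent_le ht (neg_le_neg (hsδ hβ))) (hp0 β hβ)

theorem rpow_neg_mul_setIntegral_le {t a : ℝ} (ht : 1 ≤ t) (hs : MeasurableSet s)
    (hs0 : s ⊆ Ici 0) (hp0 : ∀ β ∈ s, 0 ≤ p β) (hp : IntegrableOn p s μ) :
    t ^ (-a) * ∫ β in s ∩ Iio a, p β ∂μ ≤ ∫ β in s, t ^ (-β) * p β ∂μ := by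
  have hint := integrableOn_rpow_neg_mul ht hs hs0 hp
  calc t ^ (-a) * ∫ β in s ∩ Iio a, p β ∂μ ≤ ∫ β in s ∩ Iio a, t ^ (-β) * p β ∂μ := by
        rw [← integral_const_mul]
        exact setIntegral_mono_on ((hp.mono_set inter_subset_left).const_mul _)
          (hint.mono_set inter_subset_left) (hs.inter measurableSet_Iio) fun β hβ =>
            mul_le_mul_of_nonneg_right
              (Real.rpow_le_rpow_of_exponent_le ht (neg_le_neg hβ.2.le)) (hp0 β hβ.1)
    _ ≤ ∫ β in s, t ^ (-β) * p β ∂μ :=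
        setIntegral_mono_set hint (ae_restrict_of_forall_mem hs fun β hβ =>
          mul_nonneg (Real.rpow_nonneg (zero_le_one.trans ht) _) (hp0 β hβ))
          inter_subset_left.eventuallyLE

theorem setIntegral_rpow_neg_mul_pos {t a : ℝ} (ht : 1 ≤ t) (hs : MeasurableSet s)
    (hs0 : s ⊆ Ici 0) (hp0 : ∀ β ∈ s, 0 ≤ p β) (hp : IntegrableOn p s μ)
    (hmass : 0 < ∫ β in s ∩ Iio a, p β ∂μ) :
    0 < ∫ β in s, t ^ (-β) * p β ∂μ :=
  (mul_pos (Real.rpow_pos_of_pos (zero_lt_one.trans_le ht) _) hmass).trans_le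
    (rpow_neg_mul_setIntegral_le ht hs hs0 hp0 hp)

theorem tendsto_setIntegral_Ici_rpow_neg_mul_div (hs : MeasurableSet s) (hs0 : s ⊆ Ici 0)
    (hp0 : ∀ β ∈ s, 0 ≤ p β) (hp : IntegrableOn p s μ)
    (hmass : ∀ a > 0, 0 < ∫ β in s ∩ Iio a, p β ∂μ) {δ : ℝ} (hδ : 0 < δ) :
    Tendsto (fun t => (∫ β in s ∩ Ici δ, t ^ (-β) * p β ∂μ) / ∫ β in s, t ^ (-β) * p β ∂μ)
      atTop (𝓝 0) := by
  set m := ∫ β in s ∩ Iio (δ / 2), p β ∂μ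
  set C := ∫ β in s ∩ Ici δ, p β ∂μ
  have hm : 0 < m := hmass _ (half_pos hδ)
  have hC : 0 ≤ C := setIntegral_nonneg (hs.inter measurableSet_Ici) fun β hβ => hp0 β hβ.1
  have hbound : Tendsto (fun t : ℝ => C / m * t ^ (-(δ / 2))) atTop (𝓝 0) := by
    simpa using (tendsto_rpow_neg_atTop (half_pos hδ)).const_mul (C / m)
  refine tendsto_of_tendsto_of_tendsto_of_le_of_le' tendsto_const_nhds hbound ?_ ?_
  all_goals filter_upwards [eventually_ge_atTop 1] with t ht
  · have hw0 : ∀ β ∈ s, 0 ≤ t ^ (-β) * p β := fun β hβ =>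
      mul_nonneg (Real.rpow_nonneg (zero_le_one.trans ht) _) (hp0 β hβ)
    exact div_nonneg (setIntegral_nonneg (hs.inter measurableSet_Ici) fun β hβ => hw0 β hβ.1)
      (setIntegral_nonneg hs hw0)
  · have ht0 : 0 < t := zero_lt_one.trans_le ht
    have hnum := setIntegral_rpow_neg_mul_le ht hδ.le (hs.inter measurableSet_Ici)
      inter_subset_right (fun β hβ => hp0 β hβ.1) (hp.mono_set inter_subset_left)
    have hden := rpow_neg_mul_setIntegral_le (a := δ / 2) ht hs hs0 hp0 hp
    have hsplit : t ^ (-δ) = t ^ (-(δ / 2)) * t ^ (-(δ / 2)) := by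
      rw [← Real.rpow_add ht0]; ring_nf
    rw [div_le_iff₀ ((mul_pos (Real.rpow_pos_of_pos ht0 _) hm).trans_le hden)]
    calc ∫ β in s ∩ Ici δ, t ^ (-β) * p β ∂μ ≤ t ^ (-δ) * C := hnum
      _ = C / m * t ^ (-(δ / 2)) * (t ^ (-(δ / 2)) * m) := by rw [hsplit]; field_simp
      _ ≤ C / m * t ^ (-(δ / 2)) * ∫ β in s, t ^ (-β) * p β ∂μ :=
          mul_le_mul_of_nonneg_left hden (by positivity)

end

theorem setIntegral_inter_Iio_pos {s : Set ℝ} {p : ℝ → ℝ} {ε a : ℝ} (hs : MeasurableSet s)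
    (hε : 0 < ε) (ha : 0 < a) (hsε : Ioo 0 ε ⊆ s) (hpos : ∀ x ∈ Ioo 0 ε, 0 < p x)
    (hp0 : ∀ β ∈ s, 0 ≤ p β) (hp : IntegrableOn p s) :
    0 < ∫ β in s ∩ Iio a, p β := by
  rw [setIntegral_pos_iff_support_of_nonneg_ae (ae_restrict_of_forall_mem
    (hs.inter measurableSet_Iio) fun β hβ => hp0 β hβ.1) (hp.mono_set inter_subset_left)]
  have hsub : Ioo 0 (min ε a) ⊆ Function.support p ∩ (s ∩ Iio a) := fun x hx =>
    have hxε : x ∈ Ioo 0 ε := ⟨hx.1, hx.2.trans_le (min_le_left _ _)⟩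
    ⟨(hpos x hxε).ne', hsε hxε, hx.2.trans_le (min_le_right _ _)⟩
  exact (by simpa using lt_min hε ha : 0 < volume (Ioo 0 (min ε a))).trans_le (measure_mono hsub)

theorem distributed_order_tail_slowly_varying_general
    (p : ℝ → ℝ)
    (hp0 : ∀ β ∈ Ioo (0:ℝ) 1, 0 ≤ p β)
    (hp1 : ∫ β in Ioo (0:ℝ) 1, p β = 1)
    (hppos : ∃ ε > 0, ∀ x ∈ Ioo (0:ℝ) ε, 0 < p x)
    (Ψ : ℝ → ℝ) (hΨ : ∀ t, Ψ t = ∫ β in Ioo (0:ℝ) 1, t ^ (-β) * p β) :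
    ∀ l : ℝ, 0 < l → Tendsto (fun t : ℝ => Ψ (l * t) / Ψ t) atTop (nhds 1) := by
  intro l hl
  have hp : IntegrableOn p (Ioo 0 1) := by
    by_contra h
    rw [integral_undef h] at hp1
    exact zero_ne_one hp1
  obtain ⟨ε, hε, hpos⟩ := hppos
  have hmass : ∀ a > 0, 0 < ∫ β in Ioo 0 1 ∩ Iio a, p β := fun a ha =>
    setIntegral_inter_Iio_pos measurableSet_Ioo (lt_min hε one_pos) ha
      (Ioo_subset_Ioo_right (min_le_right _ _))
      (fun x hx => hpos x ⟨hx.1, hx.2.trans_le (min_le_left _ _)⟩) hp0 hp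
  have hs0 : Ioo (0:ℝ) 1 ⊆ Ici 0 := fun _ hx => le_of_lt hx.1
  have hlim := tendsto_setIntegral_mul_div_of_tendsto_tail (L := atTop)
    (w := fun t β => t ^ (-β) * p β) measurableSet_Ioo Ioo_subset_Icc_self
    ((Real.continuous_const_rpow hl.ne').comp continuous_neg)
    (eventually_ge_atTop 1 |>.mono fun t ht β hβ =>
      mul_nonneg (Real.rpow_nonneg (zero_le_one.trans ht) _) (hp0 β hβ))
    (eventually_ge_atTop 1 |>.mono fun t ht =>
      integrableOn_rpow_neg_mul ht measurableSet_Ioo hs0 hp)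
    (eventually_ge_atTop 1 |>.mono fun t ht =>
      setIntegral_rpow_neg_mul_pos ht measurableSet_Ioo hs0 hp0 hp (hmass 1 one_pos))
    (fun δ hδ => tendsto_setIntegral_Ici_rpow_neg_mul_div measurableSet_Ioo hs0 hp0 hp hmass hδ)
  simp only [Function.comp_apply, neg_zero, Real.rpow_zero] at hlim
  refine hlim.congr' ?_
  filter_upwards [eventually_gt_atTop 0] with t ht
  simp only [hΨ, Real.mul_rpow hl.le ht.le, mul_assoc]

/-- Let `p` be a probability density on `(0,1)` which is strictly
positive on some interval `(0,ε)` and regularly varying at zero with exponent `γ−1`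
(`γ > 0`), i.e. `p (l·x)/p x → l^(γ−1)` as `x → 0⁺` for every `l > 0`. Then
`Ψ t = ∫₀¹ t^(−β) p β dβ` is slowly varying at infinity:
`Ψ (l·t)/Ψ t → 1` as `t → ∞` for every `l > 0`. -/
theorem distributed_order_tail_slowly_varying (γ : ℝ) (hγ : 0 < γ)
    (p : ℝ → ℝ) (hpmeas : Measurable p)
    (hp0 : ∀ β ∈ Ioo (0:ℝ) 1, 0 ≤ p β)
    (hp1 : ∫ β in Ioo (0:ℝ) 1, p β = 1)
    (hppos : ∃ ε > 0, ∀ x ∈ Ioo (0:ℝ) ε, 0 < p x)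
    (hreg : ∀ l : ℝ, 0 < l →
      Tendsto (fun x : ℝ => p (l * x) / p x) (nhdsWithin 0 (Ioi (0:ℝ))) (nhds (l ^ (γ - 1))))
    (Ψ : ℝ → ℝ) (hΨ : ∀ t, Ψ t = ∫ β in Ioo (0:ℝ) 1, t ^ (-β) * p β) :
    ∀ l : ℝ, 0 < l → Tendsto (fun t : ℝ => Ψ (l * t) / Ψ t) atTop (nhds 1) :=
  distributed_order_tail_slowly_varying_general p hp0 hp1 hppos Ψ hΨ
end
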